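/- Let ω ⊂ ℝ² be a bounded measurable set with 0 ∈ ω, E(x) = ln|x|, and K(x) = ∫_ω E(x − y) dy. Then there exist constants C > 0 and R > 0 such that |K(x) − |ω| E(x)| ≤ C |x|^{−1} for all |x| > R. -/

import Mathlib

open MeasureTheory

lemma aux_log_far (X M a : ℝ) (hM : 0 < M) (hX : 2*M < X) (h1 : X - M ≤ a) (h2 : a ≤ X + M) :
    |Real.log a - Real.log X| ≤ 2*M/X := by
  have hX0 : 0 < X := by linarith
  have ha0 : 0 < a := by linarith
  rw [abs_le]
  constructor
  · have h := Real.log_le_sub_one_of_pos (show 0 < X/a from div_pos hX0 ha0)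
    rw [Real.log_div (ne_of_gt hX0) (ne_of_gt ha0)] at h
    have hb : X/a - 1 ≤ 2*M/X := by
      rw [show X/a - 1 = (X - a)/a by field_simp, div_le_div_iff₀ ha0 hX0]
      nlinarith
    linarith
  · have h := Real.log_le_sub_one_of_pos (show 0 < a/X from div_pos ha0 hX0)
    rw [Real.log_div (ne_of_gt ha0) (ne_of_gt hX0)] at h
    have hb : a/X - 1 ≤ 2*M/X := by
      rw [show a/X - 1 = (a - X)/X by field_simp, div_le_div_iff₀ hX0 hX0]
      nlinarith
    linarith

/-- Far-field remainder estimate in dimension 2: with `E(x) = ln|x|` and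
`K(x) = ∫_ω E(x-y) dy`, one has `|K(x) - |ω| E(x)| ≤ C |x|⁻¹` for `|x| > R`. -/
theorem logarithmic_potential_far_field
    (ω : Set (EuclideanSpace ℝ (Fin 2))) (hmeas : MeasurableSet ω)
    (hbd : Bornology.IsBounded ω) (h0 : (0 : EuclideanSpace ℝ (Fin 2)) ∈ ω) :
    ∃ C > (0 : ℝ), ∃ R > (0 : ℝ), ∀ x : EuclideanSpace ℝ (Fin 2), R < ‖x‖ →
      |(∫ y in ω, Real.log ‖x - y‖) - (volume ω).toReal * Real.log ‖x‖| ≤ C * ‖x‖⁻¹ := by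
  obtain ⟨r, hr⟩ := hbd.subset_closedBall 0
  set M := max r 1 with hMdef
  have hM1 : (1:ℝ) ≤ M := le_max_right _ _
  have hM0 : (0:ℝ) < M := lt_of_lt_of_le one_pos hM1
  have hωM : ω ⊆ Metric.closedBall 0 M :=
    hr.trans (Metric.closedBall_subset_closedBall (le_max_left _ _))
  have hvol : volume ω < ⊤ := hbd.measure_lt_top
  have hV0 : (0:ℝ) ≤ (volume ω).toReal := ENNReal.toReal_nonneg
  refine ⟨2*M*(volume ω).toReal + 1, by positivity, 2*M, by positivity, ?_⟩
  intro x hx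
  have hX0 : (0:ℝ) < ‖x‖ := lt_trans (by positivity) hx
  have hpt : ∀ y ∈ ω, |Real.log ‖x - y‖ - Real.log ‖x‖| ≤ 2*M/‖x‖ := by
    intro y hy
    have hyM : ‖y‖ ≤ M := by simpa using hωM hy
    have hlo : ‖x‖ - M ≤ ‖x - y‖ := by
      have := norm_sub_norm_le x y; linarith
    have hhi : ‖x - y‖ ≤ ‖x‖ + M := by
      have := norm_sub_le x y; linarith
    exact aux_log_far ‖x‖ M ‖x - y‖ hM0 hx hlo hhi
  have hint : IntegrableOn (fun y => Real.log ‖x - y‖) ω volume := by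
    apply Measure.integrableOn_of_bounded (M := |Real.log ‖x‖| + 2*M/‖x‖) hvol.ne
    · exact (Real.measurable_log.comp
        (measurable_const.sub measurable_id).norm).aestronglyMeasurable
    · filter_upwards [ae_restrict_mem hmeas] with y hy
      have h1 := hpt y hy
      have h2 : |Real.log ‖x - y‖| - |Real.log ‖x‖| ≤ |Real.log ‖x - y‖ - Real.log ‖x‖| :=
        abs_sub_abs_le_abs_sub _ _
      rw [Real.norm_eq_abs]
      linarith
  have heq : (∫ y in ω, Real.log ‖x - y‖) - (volume ω).toReal * Real.log ‖x‖
      = ∫ y in ω, (Real.log ‖x - y‖ - Real.log ‖x‖) := by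
    rw [integral_sub hint (integrableOn_const hvol.ne), setIntegral_const, smul_eq_mul]
    rfl
  rw [heq]
  have hbound : ‖∫ y in ω, (Real.log ‖x - y‖ - Real.log ‖x‖)‖
      ≤ (2*M/‖x‖) * (volume ω).toReal := by
    apply norm_setIntegral_le_of_norm_le_const hvol
    · intro y hy
      rw [Real.norm_eq_abs]
      exact hpt y hy
  rw [Real.norm_eq_abs] at hbound
  have hinv : (0:ℝ) ≤ ‖x‖⁻¹ := by positivity
  calc |∫ y in ω, (Real.log ‖x - y‖ - Real.log ‖x‖)|
      ≤ (2*M/‖x‖) * (volume ω).toReal := hbound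
    _ = (2*M*(volume ω).toReal) * ‖x‖⁻¹ := by rw [div_eq_mul_inv]; ring
    _ ≤ (2*M*(volume ω).toReal + 1) * ‖x‖⁻¹ := by nlinarith
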